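/- For α ∈ X*, let θ_α : X → X* be the affine map θ_α(x) = ω(x) + α. Then, for any subset S ⊆ X: the affine transvection group Tr^α(S) acts on the set X/ker ω of cosets of ker ω, the set im θ_α is invariant under the dual transvection group Tr(S)*, and θ_α induces a group isomorphism from the permutation group induced by Tr^α(S) on X/ker ω to the restriction of Tr(S)* to im θ_α. -/

import Mathlib

/-! Write `θ x = ω x + α`. For `s ∈ S` and `k ≠ 0`, alternation of `ω` gives
`θ (T^{α(s)}_{s,k} x) = θ x ∘ T_{s,-k}` and `θ (T^{α(s)}_{s,-k} x) = θ x ∘ T_{s,k}`, so every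
generator of either group is intertwined by `θ` with a generator of the other. Intertwining
`g` with `h` is compatible with products (in reversed order) and inverses, hence passes from
generators to the generated groups in both directions. Since `θ` and `ω` have the same fibres,
every `g ∈ Tr^α(S)`, being intertwined with some `h`, preserves the fibres of `ω`. -/

/-- Symplectic transvections as permutations. -/
def transvectionSet {K X : Type*} [Field K] [AddCommGroup X] [Module K X]
    (ω : X →ₗ[K] X →ₗ[K] K) (S : Set X) : Set (Equiv.Perm X) :=
  {f | ∃ s ∈ S, ∃ k : K, k ≠ 0 ∧ ∀ x, f x = x + (k * ω x s) • s}

/-- The transvection group `Tr(S)`. -/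
def transvectionGroup {K X : Type*} [Field K] [AddCommGroup X] [Module K X]
    (ω : X →ₗ[K] X →ₗ[K] K) (S : Set X) : Subgroup (Equiv.Perm X) :=
  Subgroup.closure (transvectionSet ω S)

/-- Affine transvections `T^{α(s)}_{s,k} : x ↦ x + k(ω(x,s) + α(s))·s`. -/
def affTransvectionSet {K X : Type*} [Field K] [AddCommGroup X] [Module K X]
    (ω : X →ₗ[K] X →ₗ[K] K) (S : Set X) (α : X → K) : Set (Equiv.Perm X) :=
  {f | ∃ s ∈ S, ∃ k : K, k ≠ 0 ∧ ∀ x, f x = x + (k * (ω x s + α s)) • s}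

/-- The affine transvection group `Tr^α(S)`. -/
def affTransvectionGroup {K X : Type*} [Field K] [AddCommGroup X] [Module K X]
    (ω : X →ₗ[K] X →ₗ[K] K) (S : Set X) (α : X → K) : Subgroup (Equiv.Perm X) :=
  Subgroup.closure (affTransvectionSet ω S α)

open Subgroup

theorem Subgroup.exists_rel_of_mem_closure {G H : Type*} [Group G] [Group H] (R : G → H → Prop)
    (one : R 1 1) (mul : ∀ {a b c d}, R a b → R c d → R (a * c) (d * b))
    (inv : ∀ {a b}, R a b → R a⁻¹ b⁻¹) {A : Set G} {L : Subgroup H}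
    (hA : ∀ a ∈ A, ∃ b ∈ L, R a b) : ∀ a ∈ closure A, ∃ b ∈ L, R a b := by
  intro a ha
  induction ha using closure_induction with
  | mem a ha => exact hA a ha
  | one => exact ⟨1, L.one_mem, one⟩
  | mul a c _ _ hac hcd =>
    obtain ⟨b, hb, rab⟩ := hac
    obtain ⟨d, hd, rcd⟩ := hcd
    exact ⟨d * b, L.mul_mem hd hb, mul rab rcd⟩
  | inv a _ hab =>
    obtain ⟨b, hb, rab⟩ := hab
    exact ⟨b⁻¹, L.inv_mem hb, inv rab⟩

section

variable {K X : Type*} [Field K] [AddCommGroup X] [Module K X]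

section Transvection

variable {ω : X →ₗ[K] X →ₗ[K] K}

def affTransvection (hω : ω.IsAlt) (s : X) (k a : K) : Equiv.Perm X where
  toFun x := x + (k * (ω x s + a)) • s
  invFun x := x + (-k * (ω x s + a)) • s
  left_inv x := by
    simp only [map_add, map_smul, LinearMap.add_apply, LinearMap.smul_apply, smul_eq_mul,
      hω.self_eq_zero s]
    module
  right_inv x := by
    simp only [map_add, map_smul, LinearMap.add_apply, LinearMap.smul_apply, smul_eq_mul,
      hω.self_eq_zero s]
    module

theorem affTransvection_apply (hω : ω.IsAlt) (s : X) (k a : K) (x : X) :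
    affTransvection hω s k a x = x + (k * (ω x s + a)) • s :=
  rfl

theorem affTransvection_mem_transvectionSet (hω : ω.IsAlt) {S : Set X} {s : X} (hs : s ∈ S)
    {k : K} (hk : k ≠ 0) : affTransvection hω s k 0 ∈ transvectionSet ω S :=
  ⟨s, hs, k, hk, fun x => by rw [affTransvection_apply, add_zero]⟩

theorem affTransvection_mem_affTransvectionSet (hω : ω.IsAlt) {S : Set X} {s : X} (hs : s ∈ S)
    {k : K} (hk : k ≠ 0) (α : X → K) : affTransvection hω s k (α s) ∈ affTransvectionSet ω S α :=
  ⟨s, hs, k, hk, fun _ => rfl⟩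

end Transvection

section Intertwines

variable (ω : X →ₗ[K] X →ₗ[K] K) (α : Module.Dual K X)

/-- `θ ∘ g = h* ∘ θ` for the affine map `θ x = ω x + α`. -/
def Intertwines (g h : Equiv.Perm X) : Prop :=
  ∀ x z, (ω (g x) + α) z = (ω x + α) (h z)

variable {ω α}

theorem intertwines_one : Intertwines ω α 1 1 :=
  fun _ _ => rfl

theorem Intertwines.mul {g₁ h₁ g₂ h₂ : Equiv.Perm X} (r₁ : Intertwines ω α g₁ h₁)
    (r₂ : Intertwines ω α g₂ h₂) : Intertwines ω α (g₁ * g₂) (h₂ * h₁) := fun x z => by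
  rw [Equiv.Perm.mul_apply, Equiv.Perm.mul_apply, r₁, r₂]

theorem Intertwines.inv {g h : Equiv.Perm X} (r : Intertwines ω α g h) :
    Intertwines ω α g⁻¹ h⁻¹ := fun x z => by
  simpa only [Equiv.Perm.coe_inv, Equiv.apply_symm_apply] using (r (g⁻¹ x) (h⁻¹ z)).symm

theorem Intertwines.map_eq_map {g h : Equiv.Perm X} (r : Intertwines ω α g h) {x x' : X}
    (hx : ω x = ω x') : ω (g x) = ω (g x') := by
  ext z
  have e := (r x z).trans ((congrArg (fun f => (f + α) (h z)) hx).trans (r x' z).symm)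
  simpa only [LinearMap.add_apply, add_left_inj] using e

variable {S : Set X}

theorem exists_intertwines_of_mem_affTransvectionGroup (hω : ω.IsAlt) {g : Equiv.Perm X}
    (hg : g ∈ affTransvectionGroup ω S α) :
    ∃ h ∈ transvectionGroup ω S, Intertwines ω α g h := by
  refine exists_rel_of_mem_closure (Intertwines ω α) intertwines_one Intertwines.mul
    Intertwines.inv ?_ g hg
  rintro g ⟨s, hs, k, hk, hg⟩
  refine ⟨affTransvection hω s (-k) 0,
    subset_closure (affTransvection_mem_transvectionSet hω hs (neg_ne_zero.2 hk)), fun x z => ?_⟩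
  simp only [hg, affTransvection_apply, add_zero, map_add, map_smul, LinearMap.add_apply,
    LinearMap.smul_apply, smul_eq_mul, ← hω.neg z s]
  ring

theorem exists_intertwines_of_mem_transvectionGroup (hω : ω.IsAlt) {h : Equiv.Perm X}
    (hh : h ∈ transvectionGroup ω S) :
    ∃ g ∈ affTransvectionGroup ω S α, Intertwines ω α g h := by
  refine exists_rel_of_mem_closure (flip (Intertwines ω α)) intertwines_one
    (fun r₁ r₂ => Intertwines.mul r₂ r₁) Intertwines.inv ?_ h hh
  rintro h ⟨s, hs, k, hk, hh⟩
  refine ⟨affTransvection hω s (-k) (α s),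
    subset_closure (affTransvection_mem_affTransvectionSet hω hs (neg_ne_zero.2 hk) α),
    fun x z => ?_⟩
  simp only [hh, affTransvection_apply, map_add, map_smul, LinearMap.add_apply,
    LinearMap.smul_apply, smul_eq_mul, ← hω.neg z s]
  ring

theorem map_eq_map_iff_of_mem_affTransvectionGroup (hω : ω.IsAlt) {g : Equiv.Perm X}
    (hg : g ∈ affTransvectionGroup ω S α) (x x' : X) : ω x = ω x' ↔ ω (g x) = ω (g x') := by
  refine ⟨fun hx => ?_, fun hgx => ?_⟩
  · obtain ⟨h, -, r⟩ := exists_intertwines_of_mem_affTransvectionGroup hω hg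
    exact r.map_eq_map hx
  · obtain ⟨h, -, r⟩ := exists_intertwines_of_mem_affTransvectionGroup hω (inv_mem hg)
    simpa only [Equiv.Perm.coe_inv, Equiv.symm_apply_apply] using r.map_eq_map hgx

end Intertwines

end

theorem stmt7_general {K X : Type*} [Field K] [AddCommGroup X] [Module K X]
    (ω : X →ₗ[K] X →ₗ[K] K) (halt : ∀ x, ω x x = 0)
    (α : Module.Dual K X) (S : Set X) :
    ∀ θα : X → Module.Dual K X, θα = (fun x => ω x + α) →
    -- `Tr^α(S)` acts on `X / ker ω`
    ((∀ g ∈ affTransvectionGroup ω S ⇑α, ∀ x x' : X,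
        ω x = ω x' ↔ ω (g x) = ω (g x')) ∧
    -- `im θ_α` is `Tr(S)*`-invariant
    (∀ h ∈ transvectionGroup ω S, ∀ x : X, ∃ x' : X,
        ∀ z, θα x (h z) = θα x' z) ∧
    -- `θ_α` intertwines the two actions in both directions
    (∀ g ∈ affTransvectionGroup ω S ⇑α, ∃ h ∈ transvectionGroup ω S,
        ∀ x z, θα (g x) z = θα x (h z)) ∧
    (∀ h ∈ transvectionGroup ω S, ∃ g ∈ affTransvectionGroup ω S ⇑α,
        ∀ x z, θα (g x) z = θα x (h z))) := by
  rintro θα rfl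
  refine ⟨fun g hg => map_eq_map_iff_of_mem_affTransvectionGroup halt hg,
    fun h hh x => ?_, fun g hg => exists_intertwines_of_mem_affTransvectionGroup halt hg,
    fun h hh => exists_intertwines_of_mem_transvectionGroup halt hh⟩
  obtain ⟨g, -, r⟩ := exists_intertwines_of_mem_transvectionGroup (α := α) halt hh
  exact ⟨g x, fun z => (r x z).symm⟩

/-- with `θ_α : X → X*`, `θ_α(x) = ω(x) + α`: for any `S ⊆ X`,
the affine transvection group `Tr^α(S)` acts on `X/ker ω` (it preserves the
fibers of `ω : X → X*`), `im θ_α` is `Tr(S)*`-invariant, and `θ_α` induces a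
group isomorphism from `Tr^α(S)` on `X/ker ω` to the restriction of `Tr(S)*`
to `im θ_α` (expressed by the intertwining conditions in both directions). -/
theorem stmt7 {K X : Type*} [Field K] [AddCommGroup X] [Module K X]
    [FiniteDimensional K X]
    (ω : X →ₗ[K] X →ₗ[K] K) (halt : ∀ x, ω x x = 0)
    (α : Module.Dual K X) (S : Set X) :
    ∀ θα : X → Module.Dual K X, θα = (fun x => ω x + α) →
    -- `Tr^α(S)` acts on `X / ker ω`
    ((∀ g ∈ affTransvectionGroup ω S ⇑α, ∀ x x' : X,
        ω x = ω x' ↔ ω (g x) = ω (g x')) ∧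
    -- `im θ_α` is `Tr(S)*`-invariant
    (∀ h ∈ transvectionGroup ω S, ∀ x : X, ∃ x' : X,
        ∀ z, θα x (h z) = θα x' z) ∧
    -- `θ_α` intertwines the two actions in both directions
    (∀ g ∈ affTransvectionGroup ω S ⇑α, ∃ h ∈ transvectionGroup ω S,
        ∀ x z, θα (g x) z = θα x (h z)) ∧
    (∀ h ∈ transvectionGroup ω S, ∃ g ∈ affTransvectionGroup ω S ⇑α,
        ∀ x z, θα (g x) z = θα x (h z))) :=
  stmt7_general ω halt α S
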